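/- arXiv:math/9902030 — 2 statements merged into one kernel-verified Lean document; each statement's English description precedes it below -/
import Mathlib

section
/- Let A be a Hopf algebra over a field k and let Φ : A → k be an algebra homomorphism (a character) such that S ∘ S = Φ^{-1} * id_A * Φ in the convolution algebra of linear maps A → A, where Φ^{-1} = Φ ∘ S is the convolution inverse of Φ. Then the antipode S of A is bijective, and Φ is a sovereign character on A, i.e. S^{-1} = Φ * S * Φ^{-1}. -/
/-!
STATEMENT 0: Let `A` be a Hopf algebra over a field `k` and let `Φ : A → k` be an algebra
homomorphism (a character) such that `S ∘ S = Φ⁻¹ * id_A * Φ` in the convolution algebra of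
linear maps `A → A`, where `Φ⁻¹ = Φ ∘ S` is the convolution inverse of `Φ`. Then the antipode
`S` of `A` is bijective, and `Φ` is a sovereign character on `A`, i.e. `S⁻¹ = Φ * S * Φ⁻¹`.
-/

open TensorProduct

/-- The convolution product of two linear maps from a Hopf algebra to itself:
`f * g = m ∘ (f ⊗ g) ∘ Δ`. -/
noncomputable def conv {k A : Type*} [CommSemiring k] [Semiring A] [HopfAlgebra k A]
    (f g : A →ₗ[k] A) : A →ₗ[k] A :=
  (LinearMap.mul' k A) ∘ₗ (TensorProduct.map f g) ∘ₗ Coalgebra.comul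

/-- A character `Φ : A → k`, viewed as a linear map `A → A` via the unit of `A`. -/
noncomputable def charToEnd {k A : Type*} [CommSemiring k] [Semiring A] [HopfAlgebra k A]
    (Φ : A →ₐ[k] k) : A →ₗ[k] A :=
  (Algebra.linearMap k A) ∘ₗ Φ.toLinearMap

/-!
Convolving a linear map `f : A → B` with a scalar-valued functional `ψ` amounts to precomposing
`f` with a twist of `A`: `(ψ * f) a = f (ψ(a₁) a₂)` and `(f * ψ) a = f (a₁ ψ(a₂))`. The left
twists form an anti-representation and the right twists a representation of the convolution
monoid of functionals, and left twists commute with right twists, so for a character `Φ` the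
twists `L` and `R` by `Φ` are commuting automorphisms of `A`. The hypothesis reads `S² = R L⁻¹`,
and `Φ * S * Φ⁻¹ = S R⁻¹ L`; since `S²` is invertible, `S` has a left and a right inverse, and
`S R⁻¹ L` is its inverse.
-/

open Coalgebra WithConv

section Twist

variable {k A : Type*} [CommSemiring k] [Semiring A] [Algebra k A] [Coalgebra k A]

noncomputable def leftTwist (ψ : WithConv (A →ₗ[k] k)) : Module.End k A :=
  (toConv (Algebra.linearMap k A ∘ₗ ψ.ofConv) * toConv LinearMap.id).ofConv

noncomputable def rightTwist (ψ : WithConv (A →ₗ[k] k)) : Module.End k A :=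
  (toConv LinearMap.id * toConv (Algebra.linearMap k A ∘ₗ ψ.ofConv)).ofConv

variable {B : Type*} [Semiring B] [Algebra k B]

theorem algebraMap_convMul_eq_comp_leftTwist (ψ : WithConv (A →ₗ[k] k)) (f : A →ₗ[k] B) :
    toConv (Algebra.linearMap k B ∘ₗ ψ.ofConv) * toConv f = toConv (f ∘ₗ leftTwist ψ) := by
  ext a
  simp [leftTwist, (ℛ k a).convMul_apply, ← Algebra.smul_def]

theorem convMul_algebraMap_eq_comp_rightTwist (ψ : WithConv (A →ₗ[k] k)) (f : A →ₗ[k] B) :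
    toConv f * toConv (Algebra.linearMap k B ∘ₗ ψ.ofConv) = toConv (f ∘ₗ rightTwist ψ) := by
  ext a
  simp [rightTwist, (ℛ k a).convMul_apply, ← Algebra.commutes, ← Algebra.smul_def]

theorem algebraMap_comp_convMul (ψ χ : WithConv (A →ₗ[k] k)) :
    toConv (Algebra.linearMap k B ∘ₗ (ψ * χ).ofConv) =
      toConv (Algebra.linearMap k B ∘ₗ ψ.ofConv) * toConv (Algebra.linearMap k B ∘ₗ χ.ofConv) :=
  congrArg toConv (LinearMap.algHom_comp_convMul_distrib (Algebra.ofId k B) ψ χ)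

theorem algebraMap_comp_convOne :
    toConv (Algebra.linearMap k B ∘ₗ (1 : WithConv (A →ₗ[k] k)).ofConv) = 1 := by
  ext; simp

@[simp] theorem leftTwist_one : leftTwist (1 : WithConv (A →ₗ[k] k)) = 1 := by
  rw [leftTwist, algebraMap_comp_convOne, one_mul]
  rfl

@[simp] theorem rightTwist_one : rightTwist (1 : WithConv (A →ₗ[k] k)) = 1 := by
  rw [rightTwist, algebraMap_comp_convOne, mul_one]
  rfl

theorem leftTwist_mul (ψ χ : WithConv (A →ₗ[k] k)) :
    leftTwist (ψ * χ) = leftTwist χ * leftTwist ψ := by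
  apply toConv_injective
  calc toConv (leftTwist (ψ * χ))
      = toConv (Algebra.linearMap k A ∘ₗ ψ.ofConv) * toConv (leftTwist χ) := by
        simp only [leftTwist, algebraMap_comp_convMul, mul_assoc, toConv_ofConv]
    _ = _ := algebraMap_convMul_eq_comp_leftTwist ψ _

theorem rightTwist_mul (ψ χ : WithConv (A →ₗ[k] k)) :
    rightTwist (ψ * χ) = rightTwist ψ * rightTwist χ := by
  apply toConv_injective
  calc toConv (rightTwist (ψ * χ))
      = toConv (rightTwist ψ) * toConv (Algebra.linearMap k A ∘ₗ χ.ofConv) := by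
        simp only [rightTwist, algebraMap_comp_convMul, mul_assoc, toConv_ofConv]
    _ = _ := convMul_algebraMap_eq_comp_rightTwist χ _

theorem commute_leftTwist_rightTwist (ψ χ : WithConv (A →ₗ[k] k)) :
    Commute (leftTwist ψ) (rightTwist χ) := by
  apply toConv_injective
  change toConv (leftTwist ψ ∘ₗ rightTwist χ) = toConv (rightTwist χ ∘ₗ leftTwist ψ)
  rw [← convMul_algebraMap_eq_comp_rightTwist, ← algebraMap_convMul_eq_comp_leftTwist, leftTwist,
    rightTwist]
  simp only [toConv_ofConv, mul_assoc]

end Twist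

theorem conv_eq_convMul {k A : Type*} [CommSemiring k] [Semiring A] [HopfAlgebra k A]
    (f g : A →ₗ[k] A) : conv f g = (toConv f * toConv g).ofConv := rfl

section Character

variable {k A B : Type*} [CommSemiring k] [Semiring A] [HopfAlgebra k A] [Semiring B]
  [Algebra k B]

theorem AlgHom.convMul_comp_antipode (h : A →ₐ[k] B) :
    toConv h.toLinearMap * toConv (h.toLinearMap ∘ₗ HopfAlgebra.antipode k) = 1 := by
  have h1 := LinearMap.algHom_comp_convMul_distrib h (toConv LinearMap.id)
    (toConv (HopfAlgebra.antipode k))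
  rw [LinearMap.id_mul_antipode] at h1
  ext a
  simpa using (LinearMap.congr_fun h1 a).symm

theorem AlgHom.comp_antipode_convMul (h : A →ₐ[k] B) :
    toConv (h.toLinearMap ∘ₗ HopfAlgebra.antipode k) * toConv h.toLinearMap = 1 := by
  have h1 := LinearMap.algHom_comp_convMul_distrib h (toConv (HopfAlgebra.antipode k))
    (toConv LinearMap.id)
  rw [LinearMap.antipode_mul_id] at h1
  ext a
  simpa using (LinearMap.congr_fun h1 a).symm

noncomputable def AlgHom.convUnit (h : A →ₐ[k] B) : (WithConv (A →ₗ[k] B))ˣ where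
  val := toConv h.toLinearMap
  inv := toConv (h.toLinearMap ∘ₗ HopfAlgebra.antipode k)
  val_inv := h.convMul_comp_antipode
  inv_val := h.comp_antipode_convMul

end Character

theorem Units.mul_mul_inv_mul_eq_one_of_mul_self_eq {M : Type*} [Monoid M] {s : M} {l r : Mˣ}
    (hlr : Commute (l : M) r) (hs : s * s = r * ↑l⁻¹) :
    s * (s * ↑r⁻¹ * l) = 1 ∧ s * ↑r⁻¹ * l * s = 1 := by
  have hright : s * (s * ↑r⁻¹ * l) = 1 := by
    rw [← mul_assoc, ← mul_assoc, hs, mul_assoc (r : M), (hlr.units_inv_left.units_inv_right).eq]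
    simp
  have hleft : l * ↑r⁻¹ * s * s = 1 := by
    rw [mul_assoc _ s, hs]
    simp [mul_assoc]
  refine ⟨hright, ?_⟩
  rw [← left_inv_eq_right_inv hleft hright]
  exact hleft

theorem antipode_bijective_and_sovereign_of_S_sq_eq_conv
    {k A : Type*} [Field k] [Ring A] [HopfAlgebra k A] (Φ : A →ₐ[k] k)
    -- `Φ⁻¹ = Φ ∘ S`, the convolution inverse of the character `Φ`,
    -- viewed as a linear map `A → A`:
    (Φinv : A →ₗ[k] A)
    (hΦinv : Φinv = charToEnd Φ ∘ₗ HopfAlgebra.antipode (R := k))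
    -- hypothesis: `S ∘ S = Φ⁻¹ * id * Φ` in the convolution algebra:
    (hS : HopfAlgebra.antipode (R := k) (A := A) ∘ₗ HopfAlgebra.antipode (R := k) =
      conv Φinv (conv LinearMap.id (charToEnd Φ))) :
    -- conclusion: `S` is bijective and `S⁻¹ = Φ * S * Φ⁻¹`:
    Function.Bijective (HopfAlgebra.antipode (R := k) (A := A)) ∧
    conv (charToEnd Φ) (conv (HopfAlgebra.antipode (R := k)) Φinv) ∘ₗ
        HopfAlgebra.antipode (R := k) = LinearMap.id ∧
    HopfAlgebra.antipode (R := k) ∘ₗ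
        conv (charToEnd Φ) (conv (HopfAlgebra.antipode (R := k)) Φinv) = LinearMap.id := by
  subst hΦinv
  set S : Module.End k A := HopfAlgebra.antipode k
  set φ := Φ.convUnit
  have hφ : toConv (charToEnd Φ) =
      toConv (Algebra.linearMap k A ∘ₗ (φ : WithConv _).ofConv) := rfl
  have hφinv : toConv (charToEnd Φ ∘ₗ S) =
      toConv (Algebra.linearMap k A ∘ₗ (↑φ⁻¹ : WithConv _).ofConv) := rfl
  let l : (Module.End k A)ˣ :=
    ⟨leftTwist φ, leftTwist ↑φ⁻¹, by simp [← leftTwist_mul], by simp [← leftTwist_mul]⟩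
  let r : (Module.End k A)ˣ :=
    ⟨rightTwist φ, rightTwist ↑φ⁻¹, by simp [← rightTwist_mul], by simp [← rightTwist_mul]⟩
  have hSS : S * S = r * ↑l⁻¹ := by
    rw [Module.End.mul_eq_comp, hS, conv_eq_convMul, conv_eq_convMul, hφ, hφinv, ← rightTwist,
      toConv_ofConv, algebraMap_convMul_eq_comp_leftTwist]
    rfl
  have hT : conv (charToEnd Φ) (conv S (charToEnd Φ ∘ₗ S)) = S * ↑r⁻¹ * l := by
    rw [conv_eq_convMul, conv_eq_convMul, hφ, hφinv, convMul_algebraMap_eq_comp_rightTwist,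
      algebraMap_convMul_eq_comp_leftTwist]
    rfl
  obtain ⟨hST, hTS⟩ :=
    Units.mul_mul_inv_mul_eq_one_of_mul_self_eq (commute_leftTwist_rightTwist _ _) hSS
  rw [hT]
  exact ⟨(Module.End.isUnit_iff S).mp ⟨⟨S, _, hST, hTS⟩, rfl⟩, hTS, hST⟩
end

section
/- Let F ∈ GL_n(k). Let H(F) be the universal k-algebra with generators (u_{ij})_{1≤i,j≤n}, (v_{ij})_{1≤i,j≤n} and relations u·ᵗv = ᵗv·u = 1 and v·F·ᵗu·F^{-1} = F·ᵗu·F^{-1}·v = 1 (matrix relations in M_n(H(F))). Then H(F) is a Hopf algebra with comultiplication Δ(u_{ij}) = Σ_k u_{ik} ⊗ u_{kj}, Δ(v_{ij}) = Σ_k v_{ik} ⊗ v_{kj}, counit ε(u_{ij}) = δ_{ij} = ε(v_{ij}), and antipode S(u) = ᵗv, S(v) = F·ᵗu·F^{-1}. Moreover the antipode is bijective, with inverse given by S^{-1}(u) = ᵗF·ᵗv·ᵗF^{-1} and S^{-1}(v) = ᵗu. -/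
open TensorProduct Matrix

/-- A Hopf algebra structure on a `k`-algebra `A`: an algebra-homomorphism comultiplication
and counit satisfying the coalgebra axioms, together with an antipode. -/
structure HopfStructure (k A : Type*) [CommRing k] [Ring A] [Algebra k A] where
  comul : A →ₐ[k] A ⊗[k] A
  counit : A →ₐ[k] k
  antipode : A →ₗ[k] A
  coassoc : (LinearMap.rTensor A comul.toLinearMap) ∘ₗ comul.toLinearMap
      = (TensorProduct.assoc k A A A).symm.toLinearMap ∘ₗ
          (LinearMap.lTensor A comul.toLinearMap) ∘ₗ comul.toLinearMap
  counit_comul : (TensorProduct.lid k A).toLinearMap ∘ₗ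
      (LinearMap.rTensor A counit.toLinearMap) ∘ₗ comul.toLinearMap = LinearMap.id
  comul_counit : (TensorProduct.rid k A).toLinearMap ∘ₗ
      (LinearMap.lTensor A counit.toLinearMap) ∘ₗ comul.toLinearMap = LinearMap.id
  antipode_left : (LinearMap.mul' k A) ∘ₗ (LinearMap.rTensor A antipode) ∘ₗ comul.toLinearMap
      = (Algebra.linearMap k A) ∘ₗ counit.toLinearMap
  antipode_right : (LinearMap.mul' k A) ∘ₗ (LinearMap.lTensor A antipode) ∘ₗ comul.toLinearMap
      = (Algebra.linearMap k A) ∘ₗ counit.toLinearMap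

/-- The generators of `H(F)`: a copy `u_{ij}` and a copy `v_{ij}`. -/
abbrev HGen (n : ℕ) := (Fin n × Fin n) ⊕ (Fin n × Fin n)

variable (k : Type*) [Field k] (n : ℕ)

/-- The generator `u_{ij}` in the free algebra. -/
noncomputable def uFree {n : ℕ} (i j : Fin n) : FreeAlgebra k (HGen n) :=
  FreeAlgebra.ι k (Sum.inl (i, j))

/-- The generator `v_{ij}` in the free algebra. -/
noncomputable def vFree {n : ℕ} (i j : Fin n) : FreeAlgebra k (HGen n) :=
  FreeAlgebra.ι k (Sum.inr (i, j))

/-- The matrix `u` of generators. -/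
noncomputable def Ufree : Matrix (Fin n) (Fin n) (FreeAlgebra k (HGen n)) :=
  Matrix.of fun i j => uFree k i j

/-- The matrix `v` of generators. -/
noncomputable def Vfree : Matrix (Fin n) (Fin n) (FreeAlgebra k (HGen n)) :=
  Matrix.of fun i j => vFree k i j

/-- A scalar matrix viewed as a matrix over the free algebra. -/
noncomputable def matFree {n : ℕ} (F : Matrix (Fin n) (Fin n) k) :
    Matrix (Fin n) (Fin n) (FreeAlgebra k (HGen n)) :=
  F.map (algebraMap k (FreeAlgebra k (HGen n)))

/-- The defining relations of `H(F)`: `u ᵗv = ᵗv u = 1` and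
`v F ᵗu F⁻¹ = F ᵗu F⁻¹ v = 1` (entrywise). -/
inductive HRel {n : ℕ} (F : Matrix (Fin n) (Fin n) k) :
    FreeAlgebra k (HGen n) → FreeAlgebra k (HGen n) → Prop
  | uv (i j : Fin n) : HRel F ((Ufree k n * (Vfree k n)ᵀ) i j)
      ((1 : Matrix (Fin n) (Fin n) (FreeAlgebra k (HGen n))) i j)
  | vu (i j : Fin n) : HRel F (((Vfree k n)ᵀ * Ufree k n) i j)
      ((1 : Matrix (Fin n) (Fin n) (FreeAlgebra k (HGen n))) i j)
  | vFuF (i j : Fin n) : HRel F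
      ((Vfree k n * matFree k F * (Ufree k n)ᵀ * matFree k F⁻¹) i j)
      ((1 : Matrix (Fin n) (Fin n) (FreeAlgebra k (HGen n))) i j)
  | FuFv (i j : Fin n) : HRel F
      ((matFree k F * (Ufree k n)ᵀ * matFree k F⁻¹ * Vfree k n) i j)
      ((1 : Matrix (Fin n) (Fin n) (FreeAlgebra k (HGen n))) i j)

/-- The universal cosovereign Hopf algebra `H(F)` as an algebra: the quotient of the free
algebra on the `u_{ij}, v_{ij}` by the defining relations. -/
noncomputable def HF {n : ℕ} (F : Matrix (Fin n) (Fin n) k) : Type _ :=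
  RingQuot (HRel k F)

noncomputable instance {n : ℕ} (F : Matrix (Fin n) (Fin n) k) : Ring (HF k F) :=
  inferInstanceAs (Ring (RingQuot (HRel k F)))

noncomputable instance {n : ℕ} (F : Matrix (Fin n) (Fin n) k) : Algebra k (HF k F) :=
  inferInstanceAs (Algebra k (RingQuot (HRel k F)))

/-- The generator `u_{ij}` of `H(F)`. -/
noncomputable def uH {n : ℕ} (F : Matrix (Fin n) (Fin n) k) (i j : Fin n) : HF k F :=
  RingQuot.mkAlgHom k (HRel k F) (uFree k i j)

/-- The generator `v_{ij}` of `H(F)`. -/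
noncomputable def vH {n : ℕ} (F : Matrix (Fin n) (Fin n) k) (i j : Fin n) : HF k F :=
  RingQuot.mkAlgHom k (HRel k F) (vFree k i j)

/-- The matrix `u` over `H(F)`. -/
noncomputable def UH {n : ℕ} (F : Matrix (Fin n) (Fin n) k) :
    Matrix (Fin n) (Fin n) (HF k F) := Matrix.of fun i j => uH k F i j

/-- The matrix `v` over `H(F)`. -/
noncomputable def VH {n : ℕ} (F : Matrix (Fin n) (Fin n) k) :
    Matrix (Fin n) (Fin n) (HF k F) := Matrix.of fun i j => vH k F i j

/-- A scalar matrix viewed as a matrix over `H(F)`. -/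
noncomputable def matH {n : ℕ} (F G : Matrix (Fin n) (Fin n) k) :
    Matrix (Fin n) (Fin n) (HF k F) := G.map (algebraMap k (HF k F))

set_option linter.unusedSectionVars false
namespace HFaux
open MulOpposite

section Toolkit
variable {k : Type*} [Field k] {n : ℕ} {B : Type*} [Ring B] [Algebra k B]

lemma smat_mul (P Q : Matrix (Fin n) (Fin n) k) :
    (P * Q).map (algebraMap k B) = P.map (algebraMap k B) * Q.map (algebraMap k B) :=
  Matrix.map_mul (f := algebraMap k B)

lemma smat_one : (1 : Matrix (Fin n) (Fin n) k).map (algebraMap k B) = 1 :=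
  Matrix.map_one _ (map_zero _) (map_one _)

lemma mul_smat_transpose (X : Matrix (Fin n) (Fin n) B) (P : Matrix (Fin n) (Fin n) k) :
    (X * P.map (algebraMap k B))ᵀ = Pᵀ.map (algebraMap k B) * Xᵀ := by
  ext i j
  simp only [Matrix.transpose_apply, Matrix.mul_apply, Matrix.map_apply]
  exact Finset.sum_congr rfl fun l _ => (Algebra.commutes _ _).symm

lemma smat_mul_transpose (X : Matrix (Fin n) (Fin n) B) (P : Matrix (Fin n) (Fin n) k) :
    (P.map (algebraMap k B) * X)ᵀ = Xᵀ * Pᵀ.map (algebraMap k B) := by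
  ext i j
  simp only [Matrix.transpose_apply, Matrix.mul_apply, Matrix.map_apply]
  exact Finset.sum_congr rfl fun l _ => (Algebra.commutes _ _)

/-- sandwich transpose: `(P X Q)ᵀ = Qᵀ Xᵀ Pᵀ` for scalar `P, Q`. -/
lemma sandwich_transpose (X : Matrix (Fin n) (Fin n) B) (P Q : Matrix (Fin n) (Fin n) k) :
    (P.map (algebraMap k B) * X * Q.map (algebraMap k B))ᵀ
      = Qᵀ.map (algebraMap k B) * Xᵀ * Pᵀ.map (algebraMap k B) := by
  rw [mul_smat_transpose, smat_mul_transpose, mul_assoc]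

/-- The anti-multiplicative "op-transpose" map on matrices. -/
noncomputable def phi (X : Matrix (Fin n) (Fin n) B) : Matrix (Fin n) (Fin n) Bᵐᵒᵖ :=
  Xᵀ.map op

lemma phi_mul (X Y : Matrix (Fin n) (Fin n) B) : phi (X * Y) = phi Y * phi X := by
  ext i j
  simp only [phi, Matrix.map_apply, Matrix.transpose_apply, Matrix.mul_apply, ← op_mul]
  rw [Finset.op_sum]

lemma phi_one : phi (1 : Matrix (Fin n) (Fin n) B) = 1 := by
  simp [phi, Matrix.map_one _ (op_zero) (op_one)]

lemma phi_transpose (X : Matrix (Fin n) (Fin n) B) : (phi X)ᵀ = phi Xᵀ := by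
  ext i j; rfl

lemma smat_op (P : Matrix (Fin n) (Fin n) k) :
    P.map (algebraMap k Bᵐᵒᵖ) = phi (Pᵀ.map (algebraMap k B)) := by
  ext i j
  simp [phi, MulOpposite.algebraMap_apply]

lemma phi_inj (X Y : Matrix (Fin n) (Fin n) B) (h : phi X = phi Y) : X = Y := by
  ext i j
  have := congrFun (congrFun h j) i
  simpa [phi] using op_injective this

lemma map_sandwich (T : B →ₗ[k] B) (P Q : Matrix (Fin n) (Fin n) k)
    (X : Matrix (Fin n) (Fin n) B) :
    (P.map (algebraMap k B) * X * Q.map (algebraMap k B)).map T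
      = P.map (algebraMap k B) * X.map T * Q.map (algebraMap k B) := by
  ext i j
  have key : ∀ Y : Matrix (Fin n) (Fin n) B,
      (P.map (algebraMap k B) * Y * Q.map (algebraMap k B)) i j
        = ∑ b, ∑ a, (P i a * Q b j) • Y a b := by
    intro Y
    simp only [Matrix.mul_apply, Matrix.map_apply, Finset.sum_mul]
    refine Finset.sum_congr rfl fun b _ => Finset.sum_congr rfl fun a _ => ?_
    rw [Algebra.smul_def, _root_.map_mul, mul_assoc, mul_assoc, Algebra.commutes (Q b j) (Y a b)]
  rw [Matrix.map_apply, key, key]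
  rw [map_sum]
  refine Finset.sum_congr rfl fun b _ => ?_
  rw [map_sum]
  exact Finset.sum_congr rfl fun a _ => (map_smul T _ _)

end Toolkit

section Relations
variable {k : Type*} [Field k] {n : ℕ} (F : Matrix (Fin n) (Fin n) k)

/-- shorthand for the quotient map -/
noncomputable def mkH : FreeAlgebra k (HGen n) →ₐ[k] HF k F :=
  RingQuot.mkAlgHom k (HRel k F)

lemma mkH_matrix_U : (Ufree k n).map (mkH F) = UH k F := by
  ext i j; rfl

lemma mkH_matrix_V : (Vfree k n).map (mkH F) = VH k F := by
  ext i j; rfl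

lemma mkH_matrix_mat (P : Matrix (Fin n) (Fin n) k) :
    (matFree k P).map (mkH F) = matH k F P := by
  ext i j
  simp only [Matrix.map_apply, matFree, matH]
  exact (mkH F).commutes (P i j)

lemma matrix_map_eq {M N : Matrix (Fin n) (Fin n) (FreeAlgebra k (HGen n))}
    (h : ∀ i j, HRel k F (M i j) (N i j)) : M.map (mkH F) = N.map (mkH F) := by
  ext i j
  exact RingQuot.mkAlgHom_rel k (h i j)

lemma rel1 : UH k F * (VH k F)ᵀ = 1 := by
  have h := matrix_map_eq F (fun i j => HRel.uv (k := k) (F := F) i j)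
  rw [← AlgHom.mapMatrix_apply, ← AlgHom.mapMatrix_apply, _root_.map_mul, _root_.map_one] at h
  rw [← h, AlgHom.mapMatrix_apply, AlgHom.mapMatrix_apply, mkH_matrix_U, Matrix.transpose_map,
    mkH_matrix_V]

lemma rel2 : (VH k F)ᵀ * UH k F = 1 := by
  have h := matrix_map_eq F (fun i j => HRel.vu (k := k) (F := F) i j)
  rw [← AlgHom.mapMatrix_apply, ← AlgHom.mapMatrix_apply, _root_.map_mul, _root_.map_one] at h
  rw [← h, AlgHom.mapMatrix_apply, AlgHom.mapMatrix_apply, mkH_matrix_U, Matrix.transpose_map,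
    mkH_matrix_V]

lemma rel3 : VH k F * matH k F F * (UH k F)ᵀ * matH k F F⁻¹ = 1 := by
  have h := matrix_map_eq F (fun i j => HRel.vFuF (k := k) (F := F) i j)
  rw [← AlgHom.mapMatrix_apply, ← AlgHom.mapMatrix_apply, _root_.map_mul, _root_.map_mul,
    _root_.map_mul, _root_.map_one] at h
  rw [← h]
  simp only [AlgHom.mapMatrix_apply, mkH_matrix_V, mkH_matrix_mat, Matrix.transpose_map,
    mkH_matrix_U]

lemma rel4 : matH k F F * (UH k F)ᵀ * matH k F F⁻¹ * VH k F = 1 := by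
  have h := matrix_map_eq F (fun i j => HRel.FuFv (k := k) (F := F) i j)
  rw [← AlgHom.mapMatrix_apply, ← AlgHom.mapMatrix_apply, _root_.map_mul, _root_.map_mul,
    _root_.map_mul, _root_.map_one] at h
  rw [← h]
  simp only [AlgHom.mapMatrix_apply, mkH_matrix_V, mkH_matrix_mat, Matrix.transpose_map,
    mkH_matrix_U]

lemma FFinv (hF : IsUnit F) : F * F⁻¹ = 1 :=
  Matrix.mul_nonsing_inv F ((Matrix.isUnit_iff_isUnit_det F).mp hF)

lemma FinvF (hF : IsUnit F) : F⁻¹ * F = 1 :=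
  Matrix.nonsing_inv_mul F ((Matrix.isUnit_iff_isUnit_det F).mp hF)

lemma matH_mul (P Q : Matrix (Fin n) (Fin n) k) :
    matH k F (P * Q) = matH k F P * matH k F Q := smat_mul P Q

lemma matH_GG' (hF : IsUnit F) : matH k F F * matH k F F⁻¹ = 1 := by
  rw [← matH_mul, FFinv F hF]; exact smat_one

lemma matH_G'G (hF : IsUnit F) : matH k F F⁻¹ * matH k F F = 1 := by
  rw [← matH_mul, FinvF F hF]; exact smat_one

/-- `V G Uᵀ = G` -/
lemma rel3' (hF : IsUnit F) : VH k F * matH k F F * (UH k F)ᵀ = matH k F F := by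
  have h := congrArg (· * matH k F F) (rel3 F)
  simpa only [mul_assoc, matH_G'G F hF, mul_one, one_mul] using h

/-- `Uᵀ G⁻¹ V = G⁻¹` -/
lemma rel4' (hF : IsUnit F) : (UH k F)ᵀ * matH k F F⁻¹ * VH k F = matH k F F⁻¹ := by
  have h := congrArg (matH k F F⁻¹ * ·) (rel4 F)
  simpa only [← mul_assoc, matH_G'G F hF, mul_one, one_mul] using h

end Relations

section Lift
variable {k : Type*} [Field k] {n : ℕ} (F : Matrix (Fin n) (Fin n) k)
variable {B : Type*} [Ring B] [Algebra k B]

/-- The algebra map from the free algebra determined by matrices `U'`, `V'`. -/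
noncomputable def f0 (U' V' : Matrix (Fin n) (Fin n) B) : FreeAlgebra k (HGen n) →ₐ[k] B :=
  FreeAlgebra.lift k (Sum.elim (fun p : Fin n × Fin n => U' p.1 p.2)
    (fun p : Fin n × Fin n => V' p.1 p.2))

lemma f0_matrix_U (U' V' : Matrix (Fin n) (Fin n) B) :
    (Ufree k n).map (f0 U' V') = U' := by
  ext i j; simp [f0, Ufree, uFree]

lemma f0_matrix_V (U' V' : Matrix (Fin n) (Fin n) B) :
    (Vfree k n).map (f0 U' V') = V' := by
  ext i j; simp [f0, Vfree, vFree]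

lemma f0_matrix_mat (U' V' : Matrix (Fin n) (Fin n) B) (P : Matrix (Fin n) (Fin n) k) :
    (matFree k P).map (f0 U' V') = P.map (algebraMap k B) := by
  ext i j
  simp only [Matrix.map_apply, matFree]
  exact AlgHom.commutes _ _

variable (U' V' : Matrix (Fin n) (Fin n) B)

lemma f0_rel (h1 : U' * V'ᵀ = 1) (h2 : V'ᵀ * U' = 1)
    (h3 : V' * F.map (algebraMap k B) * U'ᵀ * (F⁻¹).map (algebraMap k B) = 1)
    (h4 : F.map (algebraMap k B) * U'ᵀ * (F⁻¹).map (algebraMap k B) * V' = 1) :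
    ∀ ⦃x y⦄, HRel k F x y → f0 U' V' x = f0 U' V' y := by
  intro x y h
  induction h with
  | uv i j =>
    have e : (Ufree k n * (Vfree k n)ᵀ).map (f0 U' V')
        = (1 : Matrix (Fin n) (Fin n) (FreeAlgebra k (HGen n))).map (f0 U' V') := by
      rw [← AlgHom.mapMatrix_apply, ← AlgHom.mapMatrix_apply, _root_.map_mul, _root_.map_one]
      simp only [AlgHom.mapMatrix_apply, Matrix.transpose_map, f0_matrix_U, f0_matrix_V]
      exact h1
    exact congrArg (fun M => M i j) e
  | vu i j =>
    have e : ((Vfree k n)ᵀ * Ufree k n).map (f0 U' V')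
        = (1 : Matrix (Fin n) (Fin n) (FreeAlgebra k (HGen n))).map (f0 U' V') := by
      rw [← AlgHom.mapMatrix_apply, ← AlgHom.mapMatrix_apply, _root_.map_mul, _root_.map_one]
      simp only [AlgHom.mapMatrix_apply, Matrix.transpose_map, f0_matrix_U, f0_matrix_V]
      exact h2
    exact congrArg (fun M => M i j) e
  | vFuF i j =>
    have e : (Vfree k n * matFree k F * (Ufree k n)ᵀ * matFree k F⁻¹).map (f0 U' V')
        = (1 : Matrix (Fin n) (Fin n) (FreeAlgebra k (HGen n))).map (f0 U' V') := by
      rw [← AlgHom.mapMatrix_apply, ← AlgHom.mapMatrix_apply, _root_.map_mul, _root_.map_mul,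
        _root_.map_mul, _root_.map_one]
      simp only [AlgHom.mapMatrix_apply, Matrix.transpose_map, f0_matrix_U, f0_matrix_V,
        f0_matrix_mat]
      exact h3
    exact congrArg (fun M => M i j) e
  | FuFv i j =>
    have e : (matFree k F * (Ufree k n)ᵀ * matFree k F⁻¹ * Vfree k n).map (f0 U' V')
        = (1 : Matrix (Fin n) (Fin n) (FreeAlgebra k (HGen n))).map (f0 U' V') := by
      rw [← AlgHom.mapMatrix_apply, ← AlgHom.mapMatrix_apply, _root_.map_mul, _root_.map_mul,
        _root_.map_mul, _root_.map_one]
      simp only [AlgHom.mapMatrix_apply, Matrix.transpose_map, f0_matrix_U, f0_matrix_V,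
        f0_matrix_mat]
      exact h4
    exact congrArg (fun M => M i j) e

/-- The universal property of `H(F)`. -/
noncomputable def liftH (h1 : U' * V'ᵀ = 1) (h2 : V'ᵀ * U' = 1)
    (h3 : V' * F.map (algebraMap k B) * U'ᵀ * (F⁻¹).map (algebraMap k B) = 1)
    (h4 : F.map (algebraMap k B) * U'ᵀ * (F⁻¹).map (algebraMap k B) * V' = 1) :
    HF k F →ₐ[k] B :=
  RingQuot.liftAlgHom k ⟨f0 U' V', f0_rel F U' V' h1 h2 h3 h4⟩

variable {h1 : U' * V'ᵀ = 1} {h2 : V'ᵀ * U' = 1}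
  {h3 : V' * F.map (algebraMap k B) * U'ᵀ * (F⁻¹).map (algebraMap k B) = 1}
  {h4 : F.map (algebraMap k B) * U'ᵀ * (F⁻¹).map (algebraMap k B) * V' = 1}

lemma liftH_u (i j : Fin n) : liftH F U' V' h1 h2 h3 h4 (uH k F i j) = U' i j := by
  rw [uH, liftH]
  erw [RingQuot.liftAlgHom_mkAlgHom_apply]
  simp [f0, uFree]

lemma liftH_v (i j : Fin n) : liftH F U' V' h1 h2 h3 h4 (vH k F i j) = V' i j := by
  rw [vH, liftH]
  erw [RingQuot.liftAlgHom_mkAlgHom_apply]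
  simp [f0, vFree]

lemma liftH_matrix_U : (UH k F).map (liftH F U' V' h1 h2 h3 h4) = U' := by
  ext i j; exact liftH_u F U' V' i j

lemma liftH_matrix_V : (VH k F).map (liftH F U' V' h1 h2 h3 h4) = V' := by
  ext i j; exact liftH_v F U' V' i j

lemma liftH_matrix_mat (P : Matrix (Fin n) (Fin n) k) :
    (matH k F P).map (liftH F U' V' h1 h2 h3 h4) = P.map (algebraMap k B) := by
  ext i j
  simp only [Matrix.map_apply, matH]
  exact AlgHom.commutes _ _

end Lift

section Maps
variable {k : Type*} [Field k] {n : ℕ} (F : Matrix (Fin n) (Fin n) k)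

lemma matH_eq (P : Matrix (Fin n) (Fin n) k) :
    matH k F P = P.map (algebraMap k (HF k F)) := rfl

/-- cancellation helper for scalar matrices -/
lemma smat_cancel {B : Type*} [Ring B] [Algebra k B] {P Q : Matrix (Fin n) (Fin n) k}
    (hPQ : P * Q = 1) (X : Matrix (Fin n) (Fin n) B) :
    P.map (algebraMap k B) * (Q.map (algebraMap k B) * X) = X := by
  rw [← mul_assoc, ← smat_mul, hPQ, smat_one, one_mul]

lemma smat_cancel' {B : Type*} [Ring B] [Algebra k B] {P Q : Matrix (Fin n) (Fin n) k}
    (hPQ : P * Q = 1) :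
    P.map (algebraMap k B) * Q.map (algebraMap k B) = 1 := by
  rw [← smat_mul, hPQ, smat_one]

/-- The counit of `H(F)`. -/
noncomputable def epsH (hF : IsUnit F) : HF k F →ₐ[k] k :=
  liftH F 1 1 (by simp) (by simp)
    (by
      simp only [Algebra.algebraMap_self, RingHom.id_apply, Matrix.map_id, Matrix.transpose_one,
        mul_one, one_mul]
      exact FFinv F hF)
    (by
      simp only [Algebra.algebraMap_self, RingHom.id_apply, Matrix.map_id, Matrix.transpose_one,
        mul_one, one_mul]
      exact FFinv F hF)

lemma epsH_u (hF : IsUnit F) (i j : Fin n) :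
    epsH F hF (uH k F i j) = if i = j then 1 else 0 := by
  rw [epsH, liftH_u]; exact Matrix.one_apply

lemma epsH_v (hF : IsUnit F) (i j : Fin n) :
    epsH F hF (vH k F i j) = if i = j then 1 else 0 := by
  rw [epsH, liftH_v]; exact Matrix.one_apply

section Comul
open Algebra.TensorProduct

/-- left inclusion into the tensor square -/
noncomputable def incL : HF k F →ₐ[k] HF k F ⊗[k] HF k F := includeLeft

/-- right inclusion into the tensor square -/
noncomputable def incR : HF k F →ₐ[k] HF k F ⊗[k] HF k F := includeRight

lemma incL_apply (x : HF k F) : incL F x = x ⊗ₜ[k] 1 := rfl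
lemma incR_apply (x : HF k F) : incR F x = 1 ⊗ₜ[k] x := rfl

/-- entries of left and right tensor inclusions commute (matrix transpose of mixed product) -/
lemma mixed_transpose (X Y : Matrix (Fin n) (Fin n) (HF k F)) :
    ((X.map (incL F)) * (Y.map (incR F)))ᵀ
    = (Y.map (incR F))ᵀ * (X.map (incL F))ᵀ := by
  ext i j
  simp only [Matrix.transpose_apply, Matrix.mul_apply, Matrix.map_apply,
    incL_apply, incR_apply, Algebra.TensorProduct.tmul_mul_tmul,
    one_mul, mul_one]

lemma map_alg_mul {B C : Type*} [Ring B] [Algebra k B] [Ring C] [Algebra k C]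
    (f : B →ₐ[k] C) (X Y : Matrix (Fin n) (Fin n) B) :
    (X * Y).map f = X.map f * Y.map f := by
  rw [← AlgHom.mapMatrix_apply, ← AlgHom.mapMatrix_apply, ← AlgHom.mapMatrix_apply,
    _root_.map_mul]

lemma map_alg_one {B C : Type*} [Ring B] [Algebra k B] [Ring C] [Algebra k C]
    (f : B →ₐ[k] C) :
    (1 : Matrix (Fin n) (Fin n) B).map f = 1 := by
  rw [← AlgHom.mapMatrix_apply, _root_.map_one]

lemma smat_map_alg {B C : Type*} [Ring B] [Algebra k B] [Ring C] [Algebra k C]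
    (f : B →ₐ[k] C) (P : Matrix (Fin n) (Fin n) k) :
    (P.map (algebraMap k B)).map f = P.map (algebraMap k C) := by
  ext i j
  simp only [Matrix.map_apply]
  exact f.commutes _

/-- The comultiplication of `H(F)`. -/
noncomputable def DeltaH (hF : IsUnit F) : HF k F →ₐ[k] (HF k F ⊗[k] HF k F) :=
  let mkL := incL F
  let mkR := incR F
  let UL := (UH k F).map mkL
  let UR := (UH k F).map mkR
  let VL := (VH k F).map mkL
  let VR := (VH k F).map mkR
  liftH F (UL * UR) (VL * VR)
    (by
      show UL * UR * (VL * VR)ᵀ = 1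
      rw [mixed_transpose F]
      have hR : UR * (VR)ᵀ = 1 := by
        rw [← Matrix.transpose_map, ← map_alg_mul, rel1, map_alg_one]
      have hL : UL * (VL)ᵀ = 1 := by
        rw [← Matrix.transpose_map, ← map_alg_mul, rel1, map_alg_one]
      calc UL * UR * ((VR)ᵀ * (VL)ᵀ) = UL * (UR * (VR)ᵀ) * (VL)ᵀ := by
            rw [mul_assoc, mul_assoc, mul_assoc]
        _ = 1 := by rw [hR, mul_one, hL]
      )
    (by
      show (VL * VR)ᵀ * (UL * UR) = 1
      rw [mixed_transpose F]
      have hR : (VR)ᵀ * UR = 1 := by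
        rw [← Matrix.transpose_map, ← map_alg_mul, rel2, map_alg_one]
      have hL : (VL)ᵀ * UL = 1 := by
        rw [← Matrix.transpose_map, ← map_alg_mul, rel2, map_alg_one]
      calc (VR)ᵀ * (VL)ᵀ * (UL * UR) = (VR)ᵀ * ((VL)ᵀ * UL) * UR := by
            rw [mul_assoc, mul_assoc, mul_assoc]
        _ = 1 := by rw [hL, mul_one, hR]
      )
    (by
      show VL * VR * (F.map (algebraMap k (HF k F ⊗[k] HF k F))) * (UL * UR)ᵀ
          * ((F⁻¹).map (algebraMap k (HF k F ⊗[k] HF k F))) = 1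
      rw [mixed_transpose F]
      have eGR : (F.map (algebraMap k (HF k F ⊗[k] HF k F)))
          = (matH k F F).map mkR := (smat_map_alg mkR F).symm
      have eGL : (F.map (algebraMap k (HF k F ⊗[k] HF k F)))
          = (matH k F F).map mkL := (smat_map_alg mkL F).symm
      have eG'L : ((F⁻¹).map (algebraMap k (HF k F ⊗[k] HF k F)))
          = (matH k F F⁻¹).map mkL := (smat_map_alg mkL F⁻¹).symm
      have hmid : VR * ((matH k F F).map mkR) * (UR)ᵀ = (matH k F F).map mkR := by
        rw [← Matrix.transpose_map, ← map_alg_mul, ← map_alg_mul, rel3' F hF]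
      calc VL * VR * (F.map (algebraMap k (HF k F ⊗[k] HF k F))) * ((UR)ᵀ * (UL)ᵀ)
            * ((F⁻¹).map (algebraMap k (HF k F ⊗[k] HF k F)))
          = VL * (VR * ((matH k F F).map mkR) * (UR)ᵀ) * ((UL)ᵀ
            * ((matH k F F⁻¹).map mkL)) := by
            rw [eGR, eG'L]; noncomm_ring
        _ = VL * ((matH k F F).map mkR) * ((UL)ᵀ * ((matH k F F⁻¹).map mkL)) := by
            rw [hmid]
        _ = VL * ((matH k F F).map mkL) * (UL)ᵀ * ((matH k F F⁻¹).map mkL) := by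
            rw [← eGR, eGL]; noncomm_ring
        _ = 1 := by
            rw [← Matrix.transpose_map, ← map_alg_mul, ← map_alg_mul, ← map_alg_mul,
              rel3, map_alg_one]
      )
    (by
      show (F.map (algebraMap k (HF k F ⊗[k] HF k F))) * (UL * UR)ᵀ
          * ((F⁻¹).map (algebraMap k (HF k F ⊗[k] HF k F))) * (VL * VR) = 1
      rw [mixed_transpose F]
      have eGR : (F.map (algebraMap k (HF k F ⊗[k] HF k F)))
          = (matH k F F).map mkR := (smat_map_alg mkR F).symm
      have eG'L : ((F⁻¹).map (algebraMap k (HF k F ⊗[k] HF k F)))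
          = (matH k F F⁻¹).map mkL := (smat_map_alg mkL F⁻¹).symm
      have eG'R : ((F⁻¹).map (algebraMap k (HF k F ⊗[k] HF k F)))
          = (matH k F F⁻¹).map mkR := (smat_map_alg mkR F⁻¹).symm
      have hmid : (UL)ᵀ * ((matH k F F⁻¹).map mkL) * VL = (matH k F F⁻¹).map mkL := by
        rw [← Matrix.transpose_map, ← map_alg_mul, ← map_alg_mul, rel4' F hF]
      calc (F.map (algebraMap k (HF k F ⊗[k] HF k F))) * ((UR)ᵀ * (UL)ᵀ)
            * ((F⁻¹).map (algebraMap k (HF k F ⊗[k] HF k F))) * (VL * VR)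
          = ((matH k F F).map mkR) * (UR)ᵀ * ((UL)ᵀ * ((matH k F F⁻¹).map mkL) * VL)
            * VR := by
            rw [eGR, eG'L]; noncomm_ring
        _ = ((matH k F F).map mkR) * (UR)ᵀ * ((matH k F F⁻¹).map mkR) * VR := by
            rw [hmid, ← eG'L, eG'R]
        _ = 1 := by
            rw [← Matrix.transpose_map, ← map_alg_mul, ← map_alg_mul, ← map_alg_mul,
              rel4, map_alg_one]
      )

lemma DeltaH_u (hF : IsUnit F) (i j : Fin n) :
    DeltaH F hF (uH k F i j) = ∑ l, uH k F i l ⊗ₜ[k] uH k F l j := by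
  rw [DeltaH, liftH_u]
  simp [Matrix.mul_apply, Matrix.map_apply, incL_apply, incR_apply,
    Algebra.TensorProduct.tmul_mul_tmul, UH, uH, Matrix.of_apply]
  rfl

lemma DeltaH_v (hF : IsUnit F) (i j : Fin n) :
    DeltaH F hF (vH k F i j) = ∑ l, vH k F i l ⊗ₜ[k] vH k F l j := by
  rw [DeltaH, liftH_v]
  simp [Matrix.mul_apply, Matrix.map_apply, incL_apply, incR_apply,
    Algebra.TensorProduct.tmul_mul_tmul, VH, vH, Matrix.of_apply]
  rfl

end Comul

end Maps

section Antipode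
variable {k : Type*} [Field k] {n : ℕ} (F : Matrix (Fin n) (Fin n) k)

lemma cancel_left {B : Type*} [Ring B] {M N : Matrix (Fin n) (Fin n) B}
    (h : M * N = 1) (X : Matrix (Fin n) (Fin n) B) : M * (N * X) = X := by
  rw [← mul_assoc, h, one_mul]

lemma Ft_Finvt (hF : IsUnit F) : Fᵀ * (F⁻¹)ᵀ = 1 := by
  rw [← Matrix.transpose_mul, FinvF F hF, Matrix.transpose_one]

lemma Finvt_Ft (hF : IsUnit F) : (F⁻¹)ᵀ * Fᵀ = 1 := by
  rw [← Matrix.transpose_mul, FFinv F hF, Matrix.transpose_one]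

/-- the matrix `S(v) = F ᵗu F⁻¹` -/
noncomputable def WW : Matrix (Fin n) (Fin n) (HF k F) :=
  matH k F F * (UH k F)ᵀ * matH k F F⁻¹

/-- the matrix `S⁻¹(u) = ᵗF ᵗv ᵗF⁻¹` -/
noncomputable def MM : Matrix (Fin n) (Fin n) (HF k F) :=
  matH k F Fᵀ * (VH k F)ᵀ * matH k F (Fᵀ)⁻¹

lemma WWt : (WW F)ᵀ = ((F⁻¹)ᵀ).map (algebraMap k (HF k F)) * (UH k F
    * (Fᵀ).map (algebraMap k (HF k F))) := by
  have := sandwich_transpose (B := HF k F) ((UH k F)ᵀ) F F⁻¹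
  rw [Matrix.transpose_transpose] at this
  rw [show (WW F)ᵀ = ((F⁻¹)ᵀ).map (algebraMap k (HF k F)) * UH k F
      * (Fᵀ).map (algebraMap k (HF k F)) from this, mul_assoc]

lemma MMt : (MM F)ᵀ = (F⁻¹).map (algebraMap k (HF k F)) * (VH k F
    * F.map (algebraMap k (HF k F))) := by
  have e : ((Fᵀ)⁻¹)ᵀ = F⁻¹ := by
    rw [← Matrix.transpose_nonsing_inv, Matrix.transpose_transpose]
  have := sandwich_transpose (B := HF k F) ((VH k F)ᵀ) Fᵀ (Fᵀ)⁻¹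
  rw [e, Matrix.transpose_transpose, Matrix.transpose_transpose] at this
  rw [show (MM F)ᵀ = (F⁻¹).map (algebraMap k (HF k F)) * VH k F
      * F.map (algebraMap k (HF k F)) from this, mul_assoc]

lemma MMm : MM F = (Fᵀ).map (algebraMap k (HF k F)) * ((VH k F)ᵀ
    * ((F⁻¹)ᵀ).map (algebraMap k (HF k F))) := by
  rw [MM, ← Matrix.transpose_nonsing_inv, mul_assoc]; rfl

lemma rel3r' (hF : IsUnit F) : VH k F * (F.map (algebraMap k (HF k F)) * (UH k F)ᵀ)
    = F.map (algebraMap k (HF k F)) := by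
  simpa only [mul_assoc, matH_eq] using rel3' F hF

lemma rel4m' (hF : IsUnit F) : (UH k F)ᵀ * (F⁻¹).map (algebraMap k (HF k F)) * VH k F
    = (F⁻¹).map (algebraMap k (HF k F)) := rel4' F hF

/-- The antipode, as an algebra map into the opposite algebra. -/
noncomputable def SopH (hF : IsUnit F) : HF k F →ₐ[k] (HF k F)ᵐᵒᵖ :=
  liftH F (phi (VH k F)) (phi ((WW F)ᵀ))
    (by
      rw [phi_transpose, Matrix.transpose_transpose, ← phi_mul]
      rw [show WW F * VH k F = 1 by
        rw [WW]; simpa only [mul_assoc] using rel4 F, phi_one])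
    (by
      rw [phi_transpose, Matrix.transpose_transpose, ← phi_mul]
      rw [show VH k F * WW F = 1 by
        rw [WW]; simpa only [mul_assoc] using rel3 F, phi_one])
    (by
      rw [smat_op, smat_op, phi_transpose, ← phi_mul, ← phi_mul, ← phi_mul]
      rw [show (F⁻¹)ᵀ.map (algebraMap k (HF k F))
          * ((VH k F)ᵀ * (Fᵀ.map (algebraMap k (HF k F)) * (WW F)ᵀ)) = 1 by
        rw [WWt, smat_cancel (Ft_Finvt F hF), cancel_left (rel2 F),
          smat_cancel' (Finvt_Ft F hF)], phi_one])
    (by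
      rw [smat_op, smat_op, phi_transpose, ← phi_mul, ← phi_mul, ← phi_mul]
      rw [show (WW F)ᵀ * ((F⁻¹)ᵀ.map (algebraMap k (HF k F))
          * ((VH k F)ᵀ * Fᵀ.map (algebraMap k (HF k F)))) = 1 by
        rw [WWt]
        simp only [mul_assoc]
        rw [smat_cancel (Ft_Finvt F hF), cancel_left (rel1 F),
          smat_cancel' (Finvt_Ft F hF)], phi_one])

/-- The inverse antipode, as an algebra map into the opposite algebra. -/
noncomputable def SinvopH (hF : IsUnit F) : HF k F →ₐ[k] (HF k F)ᵐᵒᵖ :=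
  liftH F (phi ((MM F)ᵀ)) (phi (UH k F))
    (by
      rw [phi_transpose, ← phi_mul]
      rw [show (UH k F)ᵀ * (MM F)ᵀ = 1 by
        rw [MMt]
        simp only [← mul_assoc]
        rw [rel4m' F hF, smat_cancel' (FinvF F hF)], phi_one])
    (by
      rw [phi_transpose, ← phi_mul]
      rw [show (MM F)ᵀ * (UH k F)ᵀ = 1 by
        rw [MMt]
        simp only [mul_assoc]
        rw [rel3r' F hF, smat_cancel' (FinvF F hF)], phi_one])
    (by
      rw [smat_op, smat_op, phi_transpose, Matrix.transpose_transpose,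
        ← phi_mul, ← phi_mul, ← phi_mul]
      rw [show (F⁻¹)ᵀ.map (algebraMap k (HF k F))
          * (MM F * (Fᵀ.map (algebraMap k (HF k F)) * UH k F)) = 1 by
        rw [MMm]
        simp only [mul_assoc]
        rw [smat_cancel (Finvt_Ft F hF), smat_cancel (Finvt_Ft F hF), rel2 F], phi_one])
    (by
      rw [smat_op, smat_op, phi_transpose, Matrix.transpose_transpose,
        ← phi_mul, ← phi_mul, ← phi_mul]
      rw [show UH k F * ((F⁻¹)ᵀ.map (algebraMap k (HF k F))
          * (MM F * Fᵀ.map (algebraMap k (HF k F)))) = 1 by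
        rw [MMm]
        simp only [mul_assoc]
        rw [smat_cancel (Finvt_Ft F hF), smat_cancel' (Finvt_Ft F hF), mul_one, rel1 F],
        phi_one])

end Antipode

section LinearAntipode
open MulOpposite
variable {k : Type*} [Field k] {n : ℕ} (F : Matrix (Fin n) (Fin n) k) (hF : IsUnit F)

lemma SopH_u (i j : Fin n) : SopH F hF (uH k F i j) = op (vH k F j i) := by
  rw [SopH, liftH_u]; rfl

lemma SopH_v (i j : Fin n) : SopH F hF (vH k F i j) = op (WW F i j) := by
  rw [SopH, liftH_v]
  simp [phi, Matrix.map_apply]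

lemma SinvopH_u (i j : Fin n) : SinvopH F hF (uH k F i j) = op (MM F i j) := by
  rw [SinvopH, liftH_u]
  simp [phi, Matrix.map_apply]

lemma SinvopH_v (i j : Fin n) : SinvopH F hF (vH k F i j) = op (uH k F j i) := by
  rw [SinvopH, liftH_v]; rfl

/-- The antipode as a linear map. -/
noncomputable def Sl : HF k F →ₗ[k] HF k F :=
  (MulOpposite.opLinearEquiv k).symm.toLinearMap ∘ₗ (SopH F hF).toLinearMap

/-- The inverse antipode as a linear map. -/
noncomputable def Sinvl : HF k F →ₗ[k] HF k F :=
  (MulOpposite.opLinearEquiv k).symm.toLinearMap ∘ₗ (SinvopH F hF).toLinearMap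

lemma Sl_apply (x : HF k F) : Sl F hF x = unop (SopH F hF x) := rfl
lemma Sinvl_apply (x : HF k F) : Sinvl F hF x = unop (SinvopH F hF x) := rfl

lemma Sl_u (i j : Fin n) : Sl F hF (uH k F i j) = vH k F j i := by
  rw [Sl_apply, SopH_u]; rfl

lemma Sl_v (i j : Fin n) : Sl F hF (vH k F i j) = WW F i j := by
  rw [Sl_apply, SopH_v]; rfl

lemma Sinvl_u (i j : Fin n) : Sinvl F hF (uH k F i j) = MM F i j := by
  rw [Sinvl_apply, SinvopH_u]; rfl

lemma Sinvl_v (i j : Fin n) : Sinvl F hF (vH k F i j) = uH k F j i := by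
  rw [Sinvl_apply, SinvopH_v]; rfl

lemma Sl_mul (x y : HF k F) : Sl F hF (x * y) = Sl F hF y * Sl F hF x := by
  simp only [Sl_apply, _root_.map_mul]
  rfl

lemma Sinvl_mul (x y : HF k F) : Sinvl F hF (x * y) = Sinvl F hF y * Sinvl F hF x := by
  simp only [Sinvl_apply, _root_.map_mul]
  rfl

lemma Sl_algebraMap (r : k) : Sl F hF (algebraMap k (HF k F) r) = algebraMap k (HF k F) r := by
  rw [Sl_apply, AlgHom.commutes]
  rfl

lemma Sinvl_algebraMap (r : k) :
    Sinvl F hF (algebraMap k (HF k F) r) = algebraMap k (HF k F) r := by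
  rw [Sinvl_apply, AlgHom.commutes]
  rfl

lemma Sl_one : Sl F hF 1 = 1 := by
  simpa using Sl_algebraMap F hF 1

/-- matrix forms of the antipode values -/
lemma Sl_matrix_U : (UH k F).map (Sl F hF) = (VH k F)ᵀ := by
  ext i j; exact Sl_u F hF i j

lemma Sl_matrix_V : (VH k F).map (Sl F hF) = WW F := by
  ext i j; exact Sl_v F hF i j

lemma Sinvl_matrix_U : (UH k F).map (Sinvl F hF) = MM F := by
  ext i j; exact Sinvl_u F hF i j

lemma Sinvl_matrix_V : (VH k F).map (Sinvl F hF) = (UH k F)ᵀ := by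
  ext i j; exact Sinvl_v F hF i j

/-- An induction principle for `H(F)`. -/
lemma HF_induction {p : HF k F → Prop}
    (halg : ∀ r : k, p (algebraMap k (HF k F) r))
    (hu : ∀ i j, p (uH k F i j)) (hv : ∀ i j, p (vH k F i j))
    (hmul : ∀ x y, p x → p y → p (x * y))
    (hadd : ∀ x y, p x → p y → p (x + y)) : ∀ z, p z := by
  intro z
  obtain ⟨x, rfl⟩ := RingQuot.mkAlgHom_surjective k (HRel k F) z
  induction x using FreeAlgebra.induction with
  | grade0 r => rw [AlgHom.commutes]; exact halg r
  | grade1 g =>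
    rcases g with ⟨i, j⟩ | ⟨i, j⟩
    · exact hu i j
    · exact hv i j
  | mul x y hx hy => rw [_root_.map_mul]; exact hmul _ _ hx hy
  | add x y hx hy => rw [_root_.map_add]; exact hadd _ _ hx hy

lemma WWm : WW F = F.map (algebraMap k (HF k F)) * (UH k F)ᵀ
    * (F⁻¹).map (algebraMap k (HF k F)) := rfl

lemma MMm' : MM F = (Fᵀ).map (algebraMap k (HF k F)) * (VH k F)ᵀ
    * ((F⁻¹)ᵀ).map (algebraMap k (HF k F)) := by
  rw [MMm, mul_assoc]

lemma MM_map_Sl : (MM F).map (Sl F hF) = UH k F := by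
  rw [MMm', map_sandwich, Matrix.transpose_map (f := ⇑(Sl F hF)), Sl_matrix_V, WWt]
  simp only [mul_assoc]
  rw [smat_cancel (Ft_Finvt F hF), smat_cancel' (Ft_Finvt F hF), mul_one]

lemma WW_map_Sinvl : (WW F).map (Sinvl F hF) = VH k F := by
  rw [WWm, map_sandwich, Matrix.transpose_map (f := ⇑(Sinvl F hF)), Sinvl_matrix_U, MMt]
  simp only [mul_assoc]
  rw [smat_cancel (FFinv F hF), smat_cancel' (FFinv F hF), mul_one]

/-- `S⁻¹ ∘ S = id` and `S ∘ S⁻¹ = id` pointwise. -/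
lemma Sinvl_Sl (z : HF k F) : Sinvl F hF (Sl F hF z) = z ∧ Sl F hF (Sinvl F hF z) = z := by
  induction z using HF_induction with
  | halg r =>
    exact ⟨by rw [Sl_algebraMap, Sinvl_algebraMap], by rw [Sinvl_algebraMap, Sl_algebraMap]⟩
  | hu i j =>
    constructor
    · rw [Sl_u, Sinvl_v]
    · rw [Sinvl_u]
      have := congrArg (fun M : Matrix (Fin n) (Fin n) (HF k F) => M i j) (MM_map_Sl F hF)
      exact this
  | hv i j =>
    constructor
    · rw [Sl_v]
      have := congrArg (fun M : Matrix (Fin n) (Fin n) (HF k F) => M i j) (WW_map_Sinvl F hF)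
      exact this
    · rw [Sinvl_v, Sl_u]
  | hmul x y hx hy =>
    constructor
    · rw [Sl_mul, Sinvl_mul, hx.1, hy.1]
    · rw [Sinvl_mul, Sl_mul, hx.2, hy.2]
  | hadd x y hx hy =>
    constructor
    · rw [map_add, map_add, hx.1, hy.1]
    · rw [map_add, map_add, hx.2, hy.2]

end LinearAntipode

section Coalgebra
variable {k : Type*} [Field k] {n : ℕ} (F : Matrix (Fin n) (Fin n) k) (hF : IsUnit F)

lemma assoc_coe (w : (HF k F ⊗[k] HF k F) ⊗[k] HF k F) :
    TensorProduct.assoc k (HF k F) (HF k F) (HF k F) w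
      = Algebra.TensorProduct.assoc k k k (HF k F) (HF k F) (HF k F) w := rfl

lemma assoc_symm_coe (w : HF k F ⊗[k] (HF k F ⊗[k] HF k F)) :
    (TensorProduct.assoc k (HF k F) (HF k F) (HF k F)).symm w
      = (Algebra.TensorProduct.assoc k k k (HF k F) (HF k F) (HF k F)).symm w := rfl

lemma rT_del_eq : LinearMap.rTensor (HF k F) (DeltaH F hF).toLinearMap
    = (Algebra.TensorProduct.map (DeltaH F hF) (AlgHom.id k (HF k F))).toLinearMap := by
  apply TensorProduct.ext'
  intro a b
  simp [LinearMap.rTensor_tmul]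

lemma lT_del_eq : LinearMap.lTensor (HF k F) (DeltaH F hF).toLinearMap
    = (Algebra.TensorProduct.map (AlgHom.id k (HF k F)) (DeltaH F hF)).toLinearMap := by
  apply TensorProduct.ext'
  intro a b
  simp [LinearMap.lTensor_tmul]

lemma rT_eps_eq : LinearMap.rTensor (HF k F) (epsH F hF).toLinearMap
    = (Algebra.TensorProduct.map (epsH F hF) (AlgHom.id k (HF k F))).toLinearMap := by
  apply TensorProduct.ext'
  intro a b
  simp [LinearMap.rTensor_tmul]

lemma lT_eps_eq : LinearMap.lTensor (HF k F) (epsH F hF).toLinearMap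
    = (Algebra.TensorProduct.map (AlgHom.id k (HF k F)) (epsH F hF)).toLinearMap := by
  apply TensorProduct.ext'
  intro a b
  simp [LinearMap.lTensor_tmul]

lemma coassoc_pointwise (z : HF k F) :
    (Algebra.TensorProduct.map (DeltaH F hF) (AlgHom.id k (HF k F))) (DeltaH F hF z)
      = (Algebra.TensorProduct.assoc k k k (HF k F) (HF k F) (HF k F)).symm
          ((Algebra.TensorProduct.map (AlgHom.id k (HF k F)) (DeltaH F hF)) (DeltaH F hF z)) := by
  induction z using HF_induction with
  | halg r => simp [Algebra.TensorProduct.one_def]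
  | hu i j =>
    rw [DeltaH_u]
    simp only [map_sum, Algebra.TensorProduct.map_tmul, AlgHom.coe_id, id_eq, DeltaH_u]
    simp only [TensorProduct.sum_tmul, TensorProduct.tmul_sum, map_sum,
      Algebra.TensorProduct.assoc_symm_tmul]
    rw [Finset.sum_comm]
  | hv i j =>
    rw [DeltaH_v]
    simp only [map_sum, Algebra.TensorProduct.map_tmul, AlgHom.coe_id, id_eq, DeltaH_v]
    simp only [TensorProduct.sum_tmul, TensorProduct.tmul_sum, map_sum,
      Algebra.TensorProduct.assoc_symm_tmul]
    rw [Finset.sum_comm]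
  | hmul x y hx hy => simp only [_root_.map_mul, hx, hy]
  | hadd x y hx hy => simp only [_root_.map_add, hx, hy]

lemma counit_pointwise (z : HF k F) :
    (Algebra.TensorProduct.map (epsH F hF) (AlgHom.id k (HF k F))) (DeltaH F hF z)
        = (1 : k) ⊗ₜ[k] z
    ∧ (Algebra.TensorProduct.map (AlgHom.id k (HF k F)) (epsH F hF)) (DeltaH F hF z)
        = z ⊗ₜ[k] (1 : k) := by
  induction z using HF_induction with
  | halg r =>
    constructor
    · rw [AlgHom.commutes, AlgHom.commutes]
      simp [Algebra.TensorProduct.one_def, Algebra.algebraMap_eq_smul_one,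
        TensorProduct.smul_tmul']
    · rw [AlgHom.commutes, AlgHom.commutes]
      simp [Algebra.TensorProduct.one_def, Algebra.algebraMap_eq_smul_one,
        TensorProduct.smul_tmul', TensorProduct.tmul_smul]
  | hu i j =>
    constructor
    · rw [DeltaH_u]
      simp [epsH_u, TensorProduct.ite_tmul, Finset.sum_ite_eq]
    · rw [DeltaH_u]
      simp [epsH_u, TensorProduct.tmul_ite, Finset.sum_ite_eq']
  | hv i j =>
    constructor
    · rw [DeltaH_v]
      simp [epsH_v, TensorProduct.ite_tmul, Finset.sum_ite_eq]
    · rw [DeltaH_v]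
      simp [epsH_v, TensorProduct.tmul_ite, Finset.sum_ite_eq']
  | hmul x y hx hy =>
    constructor
    · rw [_root_.map_mul, _root_.map_mul, hx.1, hy.1, Algebra.TensorProduct.tmul_mul_tmul,
        one_mul]
    · rw [_root_.map_mul, _root_.map_mul, hx.2, hy.2, Algebra.TensorProduct.tmul_mul_tmul,
        one_mul]
  | hadd x y hx hy =>
    constructor
    · rw [map_add, map_add, hx.1, hy.1, TensorProduct.tmul_add]
    · rw [map_add, map_add, hx.2, hy.2, TensorProduct.add_tmul]

end Coalgebra

section AntipodeAxioms
variable {k : Type*} [Field k] {n : ℕ} (F : Matrix (Fin n) (Fin n) k) (hF : IsUnit F)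

lemma WW_VH : WW F * VH k F = 1 := by
  rw [WW]; simpa only [mul_assoc] using rel4 F

lemma VH_WW : VH k F * WW F = 1 := by
  rw [WW]; simpa only [mul_assoc] using rel3 F

lemma muS_mul_tmul (c d : HF k F) (p : HF k F ⊗[k] HF k F) :
    LinearMap.mul' k (HF k F) (LinearMap.rTensor (HF k F) (Sl F hF) (p * (c ⊗ₜ[k] d)))
      = Sl F hF c * LinearMap.mul' k (HF k F) (LinearMap.rTensor (HF k F) (Sl F hF) p) * d := by
  induction p using TensorProduct.induction_on with
  | zero => simp
  | tmul a b =>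
    simp only [Algebra.TensorProduct.tmul_mul_tmul, LinearMap.rTensor_tmul,
      LinearMap.mul'_apply, Sl_mul]
    noncomm_ring
  | add p q hp hq =>
    simp only [add_mul, map_add, hp, hq]
    noncomm_ring

lemma muS'_tmul_mul (a b : HF k F) (q : HF k F ⊗[k] HF k F) :
    LinearMap.mul' k (HF k F) (LinearMap.lTensor (HF k F) (Sl F hF) ((a ⊗ₜ[k] b) * q))
      = a * LinearMap.mul' k (HF k F) (LinearMap.lTensor (HF k F) (Sl F hF) q) * Sl F hF b := by
  induction q using TensorProduct.induction_on with
  | zero => simp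
  | tmul c d =>
    simp only [Algebra.TensorProduct.tmul_mul_tmul, LinearMap.lTensor_tmul,
      LinearMap.mul'_apply, Sl_mul]
    noncomm_ring
  | add p q hp hq =>
    simp only [mul_add, map_add, hp, hq]
    noncomm_ring

lemma muS_del_mul (x : HF k F)
    (hx : LinearMap.mul' k (HF k F) (LinearMap.rTensor (HF k F) (Sl F hF) (DeltaH F hF x))
      = algebraMap k (HF k F) (epsH F hF x)) (q : HF k F ⊗[k] HF k F) :
    LinearMap.mul' k (HF k F) (LinearMap.rTensor (HF k F) (Sl F hF) (DeltaH F hF x * q))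
      = algebraMap k (HF k F) (epsH F hF x)
        * LinearMap.mul' k (HF k F) (LinearMap.rTensor (HF k F) (Sl F hF) q) := by
  induction q using TensorProduct.induction_on with
  | zero => simp
  | tmul c d =>
    rw [muS_mul_tmul, hx, LinearMap.rTensor_tmul, LinearMap.mul'_apply,
      ← Algebra.commutes (epsH F hF x) (Sl F hF c), mul_assoc]
  | add p q hp hq =>
    simp only [mul_add, map_add, hp, hq]

lemma muS'_mul_del (y : HF k F)
    (hy : LinearMap.mul' k (HF k F) (LinearMap.lTensor (HF k F) (Sl F hF) (DeltaH F hF y))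
      = algebraMap k (HF k F) (epsH F hF y)) (p : HF k F ⊗[k] HF k F) :
    LinearMap.mul' k (HF k F) (LinearMap.lTensor (HF k F) (Sl F hF) (p * DeltaH F hF y))
      = LinearMap.mul' k (HF k F) (LinearMap.lTensor (HF k F) (Sl F hF) p)
        * algebraMap k (HF k F) (epsH F hF y) := by
  induction p using TensorProduct.induction_on with
  | zero => simp
  | tmul a b =>
    rw [muS'_tmul_mul, hy, LinearMap.lTensor_tmul, LinearMap.mul'_apply, mul_assoc,
      Algebra.commutes, ← mul_assoc]
  | add p q hp hq =>
    simp only [add_mul, map_add, hp, hq]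

lemma antipode_pointwise (z : HF k F) :
    LinearMap.mul' k (HF k F) (LinearMap.rTensor (HF k F) (Sl F hF) (DeltaH F hF z))
      = algebraMap k (HF k F) (epsH F hF z)
    ∧ LinearMap.mul' k (HF k F) (LinearMap.lTensor (HF k F) (Sl F hF) (DeltaH F hF z))
      = algebraMap k (HF k F) (epsH F hF z) := by
  induction z using HF_induction with
  | halg r =>
    constructor
    · rw [AlgHom.commutes, AlgHom.commutes, Algebra.TensorProduct.algebraMap_apply,
        LinearMap.rTensor_tmul, LinearMap.mul'_apply, Sl_algebraMap, mul_one]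
      rfl
    · rw [AlgHom.commutes, AlgHom.commutes, Algebra.TensorProduct.algebraMap_apply,
        LinearMap.lTensor_tmul, LinearMap.mul'_apply, Sl_one, mul_one]
      rfl
  | hu i j =>
    have h2 := congrArg (fun M : Matrix (Fin n) (Fin n) (HF k F) => M i j) (rel2 F)
    have h1 := congrArg (fun M : Matrix (Fin n) (Fin n) (HF k F) => M i j) (rel1 F)
    simp only [Matrix.mul_apply, Matrix.transpose_apply, Matrix.one_apply, UH, VH,
      Matrix.of_apply] at h1 h2
    constructor
    · rw [DeltaH_u]
      simp only [map_sum, LinearMap.rTensor_tmul, LinearMap.mul'_apply, Sl_u, epsH_u]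
      rw [h2]
      split <;> simp
    · rw [DeltaH_u]
      simp only [map_sum, LinearMap.lTensor_tmul, LinearMap.mul'_apply, Sl_u, epsH_u]
      rw [h1]
      split <;> simp
  | hv i j =>
    have h2 := congrArg (fun M : Matrix (Fin n) (Fin n) (HF k F) => M i j) (WW_VH F)
    have h1 := congrArg (fun M : Matrix (Fin n) (Fin n) (HF k F) => M i j) (VH_WW F)
    simp only [Matrix.mul_apply, Matrix.one_apply, VH, Matrix.of_apply] at h1 h2
    constructor
    · rw [DeltaH_v]
      simp only [map_sum, LinearMap.rTensor_tmul, LinearMap.mul'_apply, Sl_v, epsH_v]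
      rw [h2]
      split <;> simp
    · rw [DeltaH_v]
      simp only [map_sum, LinearMap.lTensor_tmul, LinearMap.mul'_apply, Sl_v, epsH_v]
      rw [h1]
      split <;> simp
  | hmul x y hx hy =>
    constructor
    · rw [_root_.map_mul, muS_del_mul F hF x hx.1, hy.1, _root_.map_mul, _root_.map_mul]
    · rw [_root_.map_mul, muS'_mul_del F hF y hy.2, hx.2, _root_.map_mul, _root_.map_mul]
  | hadd x y hx hy =>
    constructor
    · simp only [map_add, hx.1, hy.1]
    · simp only [map_add, hx.2, hy.2]

end AntipodeAxioms

end HFaux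

/-!
STATEMENT 1: For `F ∈ GL_n(k)`, the universal algebra `H(F)` is a Hopf algebra with
`Δ(u_{ij}) = Σ_l u_{il} ⊗ u_{lj}`, `Δ(v_{ij}) = Σ_l v_{il} ⊗ v_{lj}`,
`ε(u_{ij}) = δ_{ij} = ε(v_{ij})`, `S(u) = ᵗv`, `S(v) = F ᵗu F⁻¹`; moreover the antipode is
bijective with inverse `S⁻¹(u) = ᵗF ᵗv ᵗF⁻¹`, `S⁻¹(v) = ᵗu`.
-/
theorem HF_is_hopfAlgebra {k : Type*} [Field k] {n : ℕ}
    (F : Matrix (Fin n) (Fin n) k) (hF : IsUnit F) :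
    ∃ H : HopfStructure k (HF k F),
      (∀ i j, H.comul (uH k F i j) = ∑ l, uH k F i l ⊗ₜ[k] uH k F l j) ∧
      (∀ i j, H.comul (vH k F i j) = ∑ l, vH k F i l ⊗ₜ[k] vH k F l j) ∧
      (∀ i j, H.counit (uH k F i j) = if i = j then 1 else 0) ∧
      (∀ i j, H.counit (vH k F i j) = if i = j then 1 else 0) ∧
      (∀ i j, H.antipode (uH k F i j) = vH k F j i) ∧
      (∀ i j, H.antipode (vH k F i j) = (matH k F F * (UH k F)ᵀ * matH k F F⁻¹) i j) ∧
      Function.Bijective H.antipode ∧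
      ∃ Sinv : HF k F →ₗ[k] HF k F,
        Sinv ∘ₗ H.antipode = LinearMap.id ∧ H.antipode ∘ₗ Sinv = LinearMap.id ∧
        (∀ i j, Sinv (uH k F i j) = (matH k F Fᵀ * (VH k F)ᵀ * matH k F (Fᵀ)⁻¹) i j) ∧
        (∀ i j, Sinv (vH k F i j) = uH k F j i) := by

  classical
  open HFaux in
  refine ⟨{
    comul := DeltaH F hF
    counit := epsH F hF
    antipode := Sl F hF
    coassoc := by
      apply LinearMap.ext
      intro z
      simp only [LinearMap.comp_apply, LinearEquiv.coe_coe, AlgHom.toLinearMap_apply]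
      rw [rT_del_eq F hF, lT_del_eq F hF]
      simp only [AlgHom.toLinearMap_apply]
      rw [assoc_symm_coe]
      exact coassoc_pointwise F hF z
    counit_comul := by
      apply LinearMap.ext
      intro z
      simp only [LinearMap.comp_apply, LinearEquiv.coe_coe, AlgHom.toLinearMap_apply,
        LinearMap.id_apply]
      rw [rT_eps_eq F hF]
      simp only [AlgHom.toLinearMap_apply]
      rw [(counit_pointwise F hF z).1, TensorProduct.lid_tmul, one_smul]
    comul_counit := by
      apply LinearMap.ext
      intro z
      simp only [LinearMap.comp_apply, LinearEquiv.coe_coe, AlgHom.toLinearMap_apply,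
        LinearMap.id_apply]
      rw [lT_eps_eq F hF]
      simp only [AlgHom.toLinearMap_apply]
      rw [(counit_pointwise F hF z).2, TensorProduct.rid_tmul, one_smul]
    antipode_left := by
      apply LinearMap.ext
      intro z
      simp only [LinearMap.comp_apply, AlgHom.toLinearMap_apply, Algebra.linearMap_apply]
      exact (antipode_pointwise F hF z).1
    antipode_right := by
      apply LinearMap.ext
      intro z
      simp only [LinearMap.comp_apply, AlgHom.toLinearMap_apply, Algebra.linearMap_apply]
      exact (antipode_pointwise F hF z).2
  }, ?_, ?_, ?_, ?_, ?_, ?_, ?_, ?_⟩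
  · exact DeltaH_u F hF
  · exact DeltaH_v F hF
  · exact epsH_u F hF
  · exact epsH_v F hF
  · exact Sl_u F hF
  · exact fun i j => Sl_v F hF i j
  · exact ⟨Function.LeftInverse.injective (g := Sinvl F hF) (fun z => (Sinvl_Sl F hF z).1),
      Function.RightInverse.surjective (g := Sinvl F hF) (fun z => (Sinvl_Sl F hF z).2)⟩
  · exact ⟨Sinvl F hF,
      LinearMap.ext fun z => (Sinvl_Sl F hF z).1,
      LinearMap.ext fun z => (Sinvl_Sl F hF z).2,
      fun i j => Sinvl_u F hF i j,
      fun i j => Sinvl_v F hF i j⟩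
end
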